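/- For any a = (a_I)_I ∈ (ℝ₊)^{2^g} with all entries positive, the generalized AGM sequences a_{k,I} (defined by a_{0,I} = a_I, a_{k+1,I} = F_I(√a_k)) converge as k → ∞, and the limits are independent of the index I. -/
import Mathlib

open Filter Finset

noncomputable def genF (g : ℕ) (I : Fin g → ZMod 2) (u : (Fin g → ZMod 2) → ℝ) : ℝ :=
  (1 / 2 ^ g) * ∑ P : Fin g → ZMod 2, u (I + P) * u P

noncomputable def genAGM (g : ℕ) (a : (Fin g → ZMod 2) → ℝ) : ℕ → (Fin g → ZMod 2) → ℝ
  | 0 => a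
  | k + 1 => fun I => genF g I (fun P => Real.sqrt (genAGM g a k P))

namespace AGMaux

variable (g : ℕ)

lemma sum_shift (I : Fin g → ZMod 2) (u : (Fin g → ZMod 2) → ℝ) :
    ∑ P, u (I + P) = ∑ P, u P :=
  Fintype.sum_equiv (Equiv.addLeft I) _ _ (fun _ => rfl)

lemma card_T : (Finset.univ : Finset (Fin g → ZMod 2)).card = 2 ^ g := by
  simp [Finset.card_univ]

lemma genF_sqrt_eq (I : Fin g → ZMod 2) (u : (Fin g → ZMod 2) → ℝ) (hu : ∀ P, 0 ≤ u P) :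
    genF g I (fun P => Real.sqrt (u P)) =
      (1 / 2 ^ g) * ∑ P, u P
        - (1 / 2 ^ (g + 1)) * ∑ P, (Real.sqrt (u (I + P)) - Real.sqrt (u P)) ^ 2 := by
  have key : ∀ P : Fin g → ZMod 2, Real.sqrt (u (I + P)) * Real.sqrt (u P)
      = (u (I + P) + u P - (Real.sqrt (u (I + P)) - Real.sqrt (u P)) ^ 2) / 2 := by
    intro P
    have h1 := Real.sq_sqrt (hu (I + P))
    have h2 := Real.sq_sqrt (hu P)
    linear_combination (h1 + h2) / 2
  unfold genF
  rw [Finset.sum_congr rfl (fun P _ => key P)]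
  rw [← Finset.sum_div, Finset.sum_sub_distrib, Finset.sum_add_distrib, sum_shift]
  have : (0:ℝ) < 2 ^ g := by positivity
  field_simp
  ring

variable (a : (Fin g → ZMod 2) → ℝ) (ha : ∀ I, 0 < a I)

include ha

lemma agm_pos : ∀ k I, 0 < genAGM g a k I := by
  intro k
  induction k with
  | zero => exact ha
  | succ k ih =>
    intro I
    have hr : genAGM g a (k + 1) I = genF g I (fun P => Real.sqrt (genAGM g a k P)) := rfl
    rw [hr]
    unfold genF
    apply mul_pos (by positivity)
    apply Finset.sum_pos _ Finset.univ_nonempty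
    intro P _
    exact mul_pos (Real.sqrt_pos.2 (ih _)) (Real.sqrt_pos.2 (ih _))

noncomputable def Mx (k : ℕ) : ℝ := Finset.univ.sup' Finset.univ_nonempty (genAGM g a k)

noncomputable def mn (k : ℕ) : ℝ := Finset.univ.inf' Finset.univ_nonempty (genAGM g a k)

noncomputable def Sa (k : ℕ) : ℝ := (1 / 2 ^ g) * ∑ P, genAGM g a k P

omit ha

lemma mn_le (k : ℕ) (I : Fin g → ZMod 2) : mn g a k ≤ genAGM g a k I :=
  Finset.inf'_le _ (Finset.mem_univ I)

lemma le_Mx (k : ℕ) (I : Fin g → ZMod 2) : genAGM g a k I ≤ Mx g a k :=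
  Finset.le_sup' _ (Finset.mem_univ I)

include ha

lemma mn_pos (k : ℕ) : 0 < mn g a k := by
  rw [mn, Finset.lt_inf'_iff]
  exact fun I _ => agm_pos g a ha k I

lemma mn_le_Mx (k : ℕ) : mn g a k ≤ Mx g a k :=
  (mn_le g a k (Classical.arbitrary _)).trans (le_Mx g a k _)

lemma step_eq (k : ℕ) (I : Fin g → ZMod 2) :
    genAGM g a (k + 1) I = Sa g a k
      - (1 / 2 ^ (g + 1)) * ∑ P, (Real.sqrt (genAGM g a k (I + P)) - Real.sqrt (genAGM g a k P)) ^ 2 := by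
  have hr : genAGM g a (k + 1) I = genF g I (fun P => Real.sqrt (genAGM g a k P)) := rfl
  rw [hr, genF_sqrt_eq g I _ (fun P => (agm_pos g a ha k P).le), Sa]

lemma sq_term_bound (k : ℕ) (I P : Fin g → ZMod 2) :
    (Real.sqrt (genAGM g a k (I + P)) - Real.sqrt (genAGM g a k P)) ^ 2
      ≤ Mx g a k - mn g a k := by
  set x := genAGM g a k (I + P) with hx
  set y := genAGM g a k P with hy
  have hx0 : 0 ≤ x := (agm_pos g a ha k _).le
  have hy0 : 0 ≤ y := (agm_pos g a ha k _).le
  have hxM : x ≤ Mx g a k := le_Mx g a k _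
  have hyM : y ≤ Mx g a k := le_Mx g a k _
  have hxm : mn g a k ≤ x := mn_le g a k _
  have hym : mn g a k ≤ y := mn_le g a k _
  have hsx := Real.sq_sqrt hx0
  have hsy := Real.sq_sqrt hy0
  have h0x := Real.sqrt_nonneg x
  have h0y := Real.sqrt_nonneg y
  rcases le_total x y with h | h
  · have hs : Real.sqrt x ≤ Real.sqrt y := Real.sqrt_le_sqrt h
    nlinarith [mul_nonneg h0x (sub_nonneg.2 hs)]
  · have hs : Real.sqrt y ≤ Real.sqrt x := Real.sqrt_le_sqrt h
    nlinarith [mul_nonneg h0y (sub_nonneg.2 hs)]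

lemma step_le (k : ℕ) (I : Fin g → ZMod 2) : genAGM g a (k + 1) I ≤ Sa g a k := by
  rw [step_eq g a ha k I]
  have : (0:ℝ) ≤ (1 / 2 ^ (g + 1)) * ∑ P, (Real.sqrt (genAGM g a k (I + P)) - Real.sqrt (genAGM g a k P)) ^ 2 := by
    positivity
  linarith

lemma step_zero (k : ℕ) : genAGM g a (k + 1) 0 = Sa g a k := by
  rw [step_eq g a ha k 0]
  simp

lemma Sa_le_Mx (k : ℕ) : Sa g a k ≤ Mx g a k := by
  rw [Sa]
  have h : ∑ P, genAGM g a k P ≤ ∑ _P : Fin g → ZMod 2, Mx g a k :=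
    Finset.sum_le_sum (fun P _ => le_Mx g a k P)
  rw [Finset.sum_const, card_T, nsmul_eq_mul] at h
  push_cast at h
  have h2 : (0:ℝ) < 2 ^ g := by positivity
  calc (1 / 2 ^ g : ℝ) * ∑ P, genAGM g a k P ≤ (1 / 2 ^ g) * ((2:ℝ) ^ g * Mx g a k) :=
        mul_le_mul_of_nonneg_left h (by positivity)
    _ = Mx g a k := by field_simp
  
lemma Mx_succ (k : ℕ) : Mx g a (k + 1) = Sa g a k := by
  apply le_antisymm
  · exact Finset.sup'_le _ _ (fun I _ => step_le g a ha k I)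
  · rw [← step_zero g a ha k]; exact le_Mx g a (k + 1) 0

lemma mn_succ_ge (k : ℕ) : Sa g a k - (Mx g a k - mn g a k) / 2 ≤ mn g a (k + 1) := by
  apply Finset.le_inf'
  intro I _
  rw [step_eq g a ha k I]
  have h : ∑ P, (Real.sqrt (genAGM g a k (I + P)) - Real.sqrt (genAGM g a k P)) ^ 2
      ≤ ∑ _P : Fin g → ZMod 2, (Mx g a k - mn g a k) :=
    Finset.sum_le_sum (fun P _ => sq_term_bound g a ha k I P)
  rw [Finset.sum_const, card_T, nsmul_eq_mul] at h
  push_cast at h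
  have h2 : (0:ℝ) < 2 ^ (g + 1) := by positivity
  have hle := mul_le_mul_of_nonneg_left h (by positivity : (0:ℝ) ≤ 1 / 2 ^ (g + 1))
  have heq : (1 / 2 ^ (g + 1) : ℝ) * ((2:ℝ) ^ g * (Mx g a k - mn g a k))
      = (Mx g a k - mn g a k) / 2 := by
    field_simp
    ring
  rw [heq] at hle
  linarith

lemma mn_mono : Monotone (mn g a) := by
  apply monotone_nat_of_le_succ
  intro k
  apply Finset.le_inf'
  intro I _
  have hr : genAGM g a (k + 1) I = genF g I (fun P => Real.sqrt (genAGM g a k P)) := rfl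
  rw [hr]
  unfold genF
  have hmn := (mn_pos g a ha k).le
  have h : ∑ _P : Fin g → ZMod 2, mn g a k
      ≤ ∑ P, Real.sqrt (genAGM g a k (I + P)) * Real.sqrt (genAGM g a k P) := by
    apply Finset.sum_le_sum
    intro P _
    have h1 : Real.sqrt (mn g a k) ≤ Real.sqrt (genAGM g a k (I + P)) :=
      Real.sqrt_le_sqrt (mn_le g a k _)
    have h2 : Real.sqrt (mn g a k) ≤ Real.sqrt (genAGM g a k P) :=
      Real.sqrt_le_sqrt (mn_le g a k _)
    calc mn g a k = Real.sqrt (mn g a k) * Real.sqrt (mn g a k) :=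
          (Real.mul_self_sqrt hmn).symm
      _ ≤ _ := mul_le_mul h1 h2 (Real.sqrt_nonneg _) (Real.sqrt_nonneg _)
  rw [Finset.sum_const, card_T, nsmul_eq_mul] at h
  push_cast at h
  calc mn g a k = (1 / 2 ^ g : ℝ) * ((2:ℝ) ^ g * mn g a k) := by field_simp
    _ ≤ _ := mul_le_mul_of_nonneg_left h (by positivity)

lemma Mx_anti : Antitone (Mx g a) := by
  apply antitone_nat_of_succ_le
  intro k
  rw [Mx_succ g a ha k]
  exact Sa_le_Mx g a ha k

lemma gap_half (k : ℕ) : Mx g a (k + 1) - mn g a (k + 1) ≤ (Mx g a k - mn g a k) / 2 := by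
  have h1 := Mx_succ g a ha k
  have h2 := mn_succ_ge g a ha k
  linarith

lemma gap_le (k : ℕ) : Mx g a k - mn g a k ≤ (Mx g a 0 - mn g a 0) / 2 ^ k := by
  induction k with
  | zero => simp
  | succ k ih =>
    have := gap_half g a ha k
    have h2 : ((2:ℝ) ^ k) > 0 := by positivity
    calc Mx g a (k+1) - mn g a (k+1) ≤ (Mx g a k - mn g a k) / 2 := this
      _ ≤ ((Mx g a 0 - mn g a 0) / 2 ^ k) / 2 := by linarith
      _ = (Mx g a 0 - mn g a 0) / 2 ^ (k+1) := by ring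

end AGMaux

theorem stmt_14 (g : ℕ) (a : (Fin g → ZMod 2) → ℝ) (ha : ∀ I, 0 < a I) :
    ∃ l : ℝ, ∀ I : Fin g → ZMod 2,
      Tendsto (fun k => genAGM g a k I) atTop (nhds l) := by
  open AGMaux in
  have hMA : Antitone (Mx g a) := Mx_anti g a ha
  have hbdd : BddBelow (Set.range (Mx g a)) := by
    refine ⟨mn g a 0, ?_⟩
    rintro _ ⟨k, rfl⟩
    exact le_trans (AGMaux.mn_mono g a ha (Nat.zero_le k)) (AGMaux.mn_le_Mx g a ha k)
  set l := ⨅ k, Mx g a k with hl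
  have hM : Tendsto (Mx g a) atTop (nhds l) := tendsto_atTop_ciInf hMA hbdd
  have hgap : Tendsto (fun k => Mx g a k - mn g a k) atTop (nhds 0) := by
    have h0 : ∀ k, (0:ℝ) ≤ Mx g a k - mn g a k := fun k => by
      linarith [AGMaux.mn_le_Mx g a ha k]
    have hub : ∀ k, Mx g a k - mn g a k ≤ (Mx g a 0 - mn g a 0) / 2 ^ k :=
      AGMaux.gap_le g a ha
    have hgeo : Tendsto (fun k : ℕ => (Mx g a 0 - mn g a 0) / 2 ^ k) atTop (nhds 0) := by
      have := tendsto_pow_atTop_nhds_zero_of_lt_one (by norm_num : (0:ℝ) ≤ 1/2) (by norm_num : (1/2:ℝ) < 1)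
      have h2 := this.const_mul (Mx g a 0 - mn g a 0)
      simpa [div_pow, div_eq_mul_inv, mul_comm] using h2
    exact squeeze_zero h0 hub hgeo
  have hm : Tendsto (mn g a) atTop (nhds l) := by
    have := hM.sub hgap
    simpa using this
  refine ⟨l, fun I => ?_⟩
  exact tendsto_of_tendsto_of_tendsto_of_le_of_le hm hM
    (fun k => AGMaux.mn_le g a k I) (fun k => AGMaux.le_Mx g a k I)
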